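/- Let G = (V,E) be a finite hypergraph with demands d : E → ℝ≥0 and supplies s : V → ℝ≥0, let B ⊆ A ⊆ V, and suppose B is self-contained (B can fully serve all edges in E[B] within the supplies of B). Let h : E[A] × A → ℝ≥0 be an assignment with ∑_{v∈e∩A} h(e,v) ≤ d(e) for all e ∈ E[A] and ∑_{e∋v} h(e,v) ≤ s(v) for all v ∈ A, which maximizes the total assigned amount ∑_{e,v} h(e,v) among all such assignments. Then h saturates every edge of E[B], i.e., ∑_{v∈e∩A} h(e,v) = d(e) for every e ∈ E[B]. -/

import Mathlib

/-!
Let `g` fully serve `E[B]` from `B`. Rerouting `h` — serve every edge of `E[B]` by `g`, keep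
`h` on the other edges of `E[A]`, and drop whatever `h` sends from `A \ B` to edges of `E[B]` —
gives again a feasible assignment on `A`: a vertex of `B` only serves edges of `E[B]`, where it
now carries the load `g` puts on it, and vertices of `A \ B` carry at most their old load.
The rerouted assignment serves `∑_{E[B]} d` on `E[B]`, so by maximality `h` serves at least as
much there; as `h` serves each edge at most its demand, it serves each edge of `E[B]` exactly.
-/

/-- `B` is self-contained: the supplies of `B` can fully serve the demands of all
edges incident to `B`. -/
def SelfContained {V : Type*} [DecidableEq V] (E : Finset (Finset V))
    (d : Finset V → ℝ) (s : V → ℝ) (B : Finset V) : Prop :=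
  ∃ h : Finset V → V → ℝ,
    (∀ e v, 0 ≤ h e v) ∧
    (∀ e ∈ E.filter (fun e => (e ∩ B).Nonempty), ∑ v ∈ e ∩ B, h e v = d e) ∧
    (∀ v ∈ B, ∑ e ∈ E.filter (fun e => (e ∩ B).Nonempty ∧ v ∈ e), h e v ≤ s v)

open Finset

section Assignment

variable {V : Type*} [DecidableEq V] {E : Finset (Finset V)} {d : Finset V → ℝ} {s : V → ℝ}
  {A B : Finset V}

/-- `E[A]`, the edges meeting `A`. -/
def incidentEdges (E : Finset (Finset V)) (A : Finset V) : Finset (Finset V) :=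
  E.filter fun e => (e ∩ A).Nonempty

theorem incidentEdges_mono (hBA : B ⊆ A) : incidentEdges E B ⊆ incidentEdges E A :=
  monotone_filter_right E fun _ _ he => he.mono (inter_subset_inter_left hBA)

theorem filter_incidentEdges_of_subset (hBA : B ⊆ A) :
    (incidentEdges E A).filter (fun e => (e ∩ B).Nonempty) = incidentEdges E B := by
  rw [incidentEdges, filter_filter, incidentEdges]
  exact filter_congr fun _ _ => and_iff_right_of_imp fun he => he.mono (inter_subset_inter_left hBA)

structure IsAssignment (E : Finset (Finset V)) (d : Finset V → ℝ) (s : V → ℝ) (A : Finset V)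
    (h : Finset V → V → ℝ) : Prop where
  nonneg : ∀ e v, 0 ≤ h e v
  demand_le : ∀ e ∈ incidentEdges E A, ∑ v ∈ e ∩ A, h e v ≤ d e
  supply_le : ∀ v ∈ A, ∑ e ∈ E.filter (fun e => (e ∩ A).Nonempty ∧ v ∈ e), h e v ≤ s v

def served (E : Finset (Finset V)) (A : Finset V) (h : Finset V → V → ℝ) : ℝ :=
  ∑ e ∈ incidentEdges E A, ∑ v ∈ e ∩ A, h e v

theorem served_eq_add_of_subset (hBA : B ⊆ A) (h : Finset V → V → ℝ) :
    served E A h = ∑ e ∈ incidentEdges E B, ∑ v ∈ e ∩ A, h e v +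
      ∑ e ∈ (incidentEdges E A).filter (fun e => ¬(e ∩ B).Nonempty), ∑ v ∈ e ∩ A, h e v := by
  rw [served, ← sum_filter_add_sum_filter_not _ fun e => (e ∩ B).Nonempty,
    filter_incidentEdges_of_subset hBA]

def reroute (B : Finset V) (g h : Finset V → V → ℝ) (e : Finset V) (v : V) : ℝ :=
  if (e ∩ B).Nonempty then (if v ∈ B then g e v else 0) else h e v

variable {g h : Finset V → V → ℝ} {e : Finset V} {v : V}

theorem sum_reroute_of_nonempty (hBA : B ⊆ A) (he : (e ∩ B).Nonempty) :
    ∑ v ∈ e ∩ A, reroute B g h e v = ∑ v ∈ e ∩ B, g e v := by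
  simp only [reroute, if_pos he]
  rw [sum_ite_mem, inter_assoc, inter_eq_right.2 hBA]

theorem reroute_of_not_nonempty (he : ¬(e ∩ B).Nonempty) : reroute B g h e = h e :=
  funext fun _ => if_neg he

theorem reroute_of_nonempty_of_mem (he : (e ∩ B).Nonempty) (hv : v ∈ B) :
    reroute B g h e v = g e v := by
  simp only [reroute, if_pos he, if_pos hv]

theorem reroute_le_of_notMem (hh : 0 ≤ h e v) (hv : v ∉ B) : reroute B g h e v ≤ h e v := by
  unfold reroute
  split_ifs
  · exact hh
  · exact le_rfl

theorem IsAssignment.reroute (hBA : B ⊆ A) (hg : IsAssignment E d s B g)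
    (hh : IsAssignment E d s A h) : IsAssignment E d s A (reroute B g h) where
  nonneg e v := by
    unfold _root_.reroute
    split_ifs
    exacts [hg.nonneg e v, le_rfl, hh.nonneg e v]
  demand_le e he := by
    by_cases heB : (e ∩ B).Nonempty
    · rw [sum_reroute_of_nonempty hBA heB]
      exact hg.demand_le e (mem_filter.2 ⟨(mem_filter.1 he).1, heB⟩)
    · rw [reroute_of_not_nonempty heB]
      exact hh.demand_le e he
  supply_le v hv := by
    by_cases hvB : v ∈ B
    · have hstar : E.filter (fun e => (e ∩ A).Nonempty ∧ v ∈ e) =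
          E.filter (fun e => (e ∩ B).Nonempty ∧ v ∈ e) :=
        filter_congr fun e _ => ⟨fun ⟨_, hve⟩ => ⟨⟨v, mem_inter.2 ⟨hve, hvB⟩⟩, hve⟩,
          fun ⟨heB, hve⟩ => ⟨heB.mono (inter_subset_inter_left hBA), hve⟩⟩
      rw [hstar, sum_congr rfl fun e he => reroute_of_nonempty_of_mem (mem_filter.1 he).2.1 hvB]
      exact hg.supply_le v hvB
    · exact (sum_le_sum fun e _ => reroute_le_of_notMem (hh.nonneg e v) hvB).trans
        (hh.supply_le v hv)

theorem served_reroute (hBA : B ⊆ A)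
    (hsat : ∀ e ∈ incidentEdges E B, ∑ v ∈ e ∩ B, g e v = d e) :
    served E A (reroute B g h) = ∑ e ∈ incidentEdges E B, d e +
      ∑ e ∈ (incidentEdges E A).filter (fun e => ¬(e ∩ B).Nonempty), ∑ v ∈ e ∩ A, h e v := by
  rw [served_eq_add_of_subset hBA]
  congr 1
  · exact sum_congr rfl fun e he =>
      (sum_reroute_of_nonempty hBA (mem_filter.1 he).2).trans (hsat e he)
  · exact sum_congr rfl fun e he => by rw [reroute_of_not_nonempty (mem_filter.1 he).2]

end Assignment

theorem stmt_13_general {V : Type*} [DecidableEq V]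
    (E : Finset (Finset V))
    (d : Finset V → ℝ)
    (s : V → ℝ)
    (A B : Finset V) (hBA : B ⊆ A)
    (hB : SelfContained E d s B)
    (h : Finset V → V → ℝ)
    (hpos : ∀ e v, 0 ≤ h e v)
    (hdem : ∀ e ∈ E.filter (fun e => (e ∩ A).Nonempty), ∑ v ∈ e ∩ A, h e v ≤ d e)
    (hsup : ∀ v ∈ A, ∑ e ∈ E.filter (fun e => (e ∩ A).Nonempty ∧ v ∈ e), h e v ≤ s v)
    (hmax : ∀ h' : Finset V → V → ℝ,
      (∀ e v, 0 ≤ h' e v) →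
      (∀ e ∈ E.filter (fun e => (e ∩ A).Nonempty), ∑ v ∈ e ∩ A, h' e v ≤ d e) →
      (∀ v ∈ A, ∑ e ∈ E.filter (fun e => (e ∩ A).Nonempty ∧ v ∈ e), h' e v ≤ s v) →
      ∑ e ∈ E.filter (fun e => (e ∩ A).Nonempty), ∑ v ∈ e ∩ A, h' e v ≤
        ∑ e ∈ E.filter (fun e => (e ∩ A).Nonempty), ∑ v ∈ e ∩ A, h e v) :
    ∀ e ∈ E.filter (fun e => (e ∩ B).Nonempty), ∑ v ∈ e ∩ A, h e v = d e := by
  obtain ⟨g, hg0, hsat, hgsup⟩ := hB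
  have hg : IsAssignment E d s B g := ⟨hg0, fun e he => (hsat e he).le, hgsup⟩
  have hh : IsAssignment E d s A h := ⟨hpos, hdem, hsup⟩
  have hrerouted := hg.reroute hBA hh
  have hle : served E A (reroute B g h) ≤ served E A h :=
    hmax _ hrerouted.nonneg hrerouted.demand_le hrerouted.supply_le
  rw [served_reroute hBA hsat, served_eq_add_of_subset hBA, add_le_add_iff_right] at hle
  have hdemB : ∀ e ∈ incidentEdges E B, ∑ v ∈ e ∩ A, h e v ≤ d e :=
    fun e he => hh.demand_le e (incidentEdges_mono hBA he)
  exact (sum_eq_sum_iff_of_le hdemB).1 ((sum_le_sum hdemB).antisymm hle)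

theorem stmt_13 {V : Type*} [Fintype V] [DecidableEq V]
    (E : Finset (Finset V)) (hE : ∀ e ∈ E, e.Nonempty)
    (d : Finset V → ℝ) (hd : ∀ e ∈ E, 0 ≤ d e)
    (s : V → ℝ) (hs : ∀ v, 0 ≤ s v)
    (A B : Finset V) (hBA : B ⊆ A)
    (hB : SelfContained E d s B)
    (h : Finset V → V → ℝ)
    (hpos : ∀ e v, 0 ≤ h e v)
    (hdem : ∀ e ∈ E.filter (fun e => (e ∩ A).Nonempty), ∑ v ∈ e ∩ A, h e v ≤ d e)
    (hsup : ∀ v ∈ A, ∑ e ∈ E.filter (fun e => (e ∩ A).Nonempty ∧ v ∈ e), h e v ≤ s v)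
    (hmax : ∀ h' : Finset V → V → ℝ,
      (∀ e v, 0 ≤ h' e v) →
      (∀ e ∈ E.filter (fun e => (e ∩ A).Nonempty), ∑ v ∈ e ∩ A, h' e v ≤ d e) →
      (∀ v ∈ A, ∑ e ∈ E.filter (fun e => (e ∩ A).Nonempty ∧ v ∈ e), h' e v ≤ s v) →
      ∑ e ∈ E.filter (fun e => (e ∩ A).Nonempty), ∑ v ∈ e ∩ A, h' e v ≤
        ∑ e ∈ E.filter (fun e => (e ∩ A).Nonempty), ∑ v ∈ e ∩ A, h e v) :
    ∀ e ∈ E.filter (fun e => (e ∩ B).Nonempty), ∑ v ∈ e ∩ A, h e v = d e :=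
  stmt_13_general E d s A B hBA hB h hpos hdem hsup hmax
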